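/- Let f : 2^Ω → ℝ be a monotone nondecreasing submodular set function with f(∅) = 0 on a finite ground set Ω. Let X_K be the set produced by the greedy algorithm that starts from ∅ and at each of K steps adds an element a maximizing f(X ∪ {a}). Then f(X_K) ≥ (1 − (1 − 1/K)^K) · max{f(S) : |S| ≤ K} ≥ (1 − 1/e) · max{f(S) : |S| ≤ K}. -/

import Mathlib

lemma sum_marginal_aux {Ω : Type*} [DecidableEq Ω] (f : Finset Ω → ℝ)
    (hmono : ∀ X Y : Finset Ω, X ⊆ Y → f X ≤ f Y)
    (hsub : ∀ X Y : Finset Ω, X ⊆ Y → ∀ a ∉ Y,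
      f (insert a Y) - f Y ≤ f (insert a X) - f X)
    (T : Finset Ω) :
    ∀ A : Finset Ω, f (A ∪ T) - f T ≤ ∑ a ∈ A, (f (insert a T) - f T) := by
  intro A
  induction A using Finset.induction_on with
  | empty => simp
  | insert a s ha ih =>
    rw [Finset.sum_insert ha, Finset.insert_union]
    have h1 : f (insert a (s ∪ T)) - f (s ∪ T) ≤ f (insert a T) - f T := by
      by_cases h : a ∈ s ∪ T
      · rw [Finset.insert_eq_self.mpr h]
        have := hmono T (insert a T) (Finset.subset_insert _ _)
        linarith
      · exact hsub T (s ∪ T) Finset.subset_union_right a h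
    linarith

/-- Nemhauser–Wolsey–Fisher greedy guarantee: for a monotone submodular `f` with
`f ∅ = 0`, the `K`-step greedy set `X K` satisfies
`f (X K) ≥ (1 - (1 - 1/K)^K) · max{f S : |S| ≤ K} ≥ (1 - 1/e) · max{f S : |S| ≤ K}`. -/
theorem stmt_5 {Ω : Type*} [Fintype Ω] [DecidableEq Ω]
    (f : Finset Ω → ℝ)
    (hmono : ∀ X Y : Finset Ω, X ⊆ Y → f X ≤ f Y)
    (hsub : ∀ X Y : Finset Ω, X ⊆ Y → ∀ a ∉ Y,
      f (insert a Y) - f Y ≤ f (insert a X) - f X)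
    (hf0 : f ∅ = 0)
    (K : ℕ) (hK : 1 ≤ K)
    (X : ℕ → Finset Ω) (hX0 : X 0 = ∅)
    (hgreedy : ∀ i < K, ∃ a, X (i + 1) = insert a (X i) ∧
      ∀ b, f (insert b (X i)) ≤ f (insert a (X i))) :
    ∀ S : Finset Ω, S.card ≤ K →
      (1 - 1 / Real.exp 1) * f S ≤ (1 - (1 - 1 / (K : ℝ)) ^ K) * f S ∧
      (1 - (1 - 1 / (K : ℝ)) ^ K) * f S ≤ f (X K) := by
  intro S hS
  have hKpos : (0:ℝ) < K := by exact_mod_cast hK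
  have hq : (0:ℝ) ≤ 1 - 1/(K:ℝ) := by
    have h1 : (1:ℝ) ≤ K := by exact_mod_cast hK
    have : 1/(K:ℝ) ≤ 1 := by
      rw [div_le_one hKpos]; exact h1
    linarith
  have hfS : 0 ≤ f S := hf0 ▸ hmono ∅ S (Finset.empty_subset S)
  constructor
  · apply mul_le_mul_of_nonneg_right _ hfS
    have hexp : (1 - 1/(K:ℝ))^K ≤ 1 / Real.exp 1 := by
      have h1 : 1 - 1/(K:ℝ) ≤ Real.exp (-(1/K)) := by
        have := Real.add_one_le_exp (-(1/(K:ℝ))); linarith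
      calc (1 - 1/(K:ℝ))^K ≤ (Real.exp (-(1/K)))^K := pow_le_pow_left₀ hq h1 K
        _ = Real.exp ((K:ℝ) * (-(1/K))) := (Real.exp_nat_mul _ _).symm
        _ = Real.exp (-1) := by
            congr 1
            field_simp
        _ = 1 / Real.exp 1 := by rw [Real.exp_neg, inv_eq_one_div]
    linarith
  · have key : ∀ i, i < K → f S - f (X (i+1)) ≤ (1 - 1/(K:ℝ)) * (f S - f (X i)) := by
      intro i hi
      obtain ⟨a, hXa, hmax⟩ := hgreedy i hi
      have hδ0 : 0 ≤ f (X (i+1)) - f (X i) := by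
        have := hmono (X i) (X (i+1)) (hXa ▸ Finset.subset_insert _ _)
        linarith
      have hbound : f S - f (X i) ≤ (K:ℝ) * (f (X (i+1)) - f (X i)) := by
        have h2 := sum_marginal_aux f hmono hsub (X i) S
        have h3 : f S ≤ f (S ∪ X i) := hmono _ _ Finset.subset_union_left
        have h4 : ∑ b ∈ S, (f (insert b (X i)) - f (X i)) ≤
            ∑ _b ∈ S, (f (X (i+1)) - f (X i)) := by
          apply Finset.sum_le_sum
          intro b _
          have := hmax b
          rw [hXa]
          linarith
        rw [Finset.sum_const, nsmul_eq_mul] at h4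
        have h5 : (S.card : ℝ) * (f (X (i+1)) - f (X i)) ≤
            (K:ℝ) * (f (X (i+1)) - f (X i)) := by
          apply mul_le_mul_of_nonneg_right _ hδ0
          exact_mod_cast hS
        linarith
      have heq : (1 - 1/(K:ℝ)) * (f S - f (X i)) =
          (f S - f (X i)) - (f S - f (X i)) / K := by ring
      rw [heq]
      have hdiv : (f S - f (X i)) / K ≤ f (X (i+1)) - f (X i) := by
        rw [div_le_iff₀ hKpos]
        linarith [mul_comm (f (X (i+1)) - f (X i)) (K:ℝ)]
      linarith
    have ind : ∀ i, i ≤ K → f S - f (X i) ≤ (1 - 1/(K:ℝ))^i * f S := by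
      intro i
      induction i with
      | zero => intro _; simp [hX0, hf0]
      | succ n ih =>
        intro hn
        have hnK : n < K := hn
        calc f S - f (X (n+1)) ≤ (1 - 1/(K:ℝ)) * (f S - f (X n)) := key n hnK
          _ ≤ (1 - 1/(K:ℝ)) * ((1 - 1/(K:ℝ))^n * f S) :=
              mul_le_mul_of_nonneg_left (ih (le_of_lt hnK)) hq
          _ = (1 - 1/(K:ℝ))^(n+1) * f S := by ring
    have := ind K le_rfl
    linarith
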